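/- arXiv:2208.13989 — 2 statements merged into one kernel-verified Lean document; each statement's English description precedes it below -/
import Mathlib

section
/- Fix integers N ≥ 1 and 0 ≤ ℓ ≤ N−1 and a real β > 0, and let R_{Nℓ}(ρ) = e^{−ρ/2} ρ^ℓ · Σ_{t=0}^{N−ℓ−1} (−1)^t · binom(N+ℓ, N−ℓ−1−t) · ρ^t / t!. Then for every p ∈ ℝ the transform ψ_{Nℓ}(p) = ∫₀^∞ e^{i p r} R_{Nℓ}(2β r) r dr admits the rational closed form (equivalent to the Lombardi–Ogilvie wave functions): ψ_{Nℓ}(p) = Σ_{t=0}^{N−ℓ−1} (−1)^t · binom(N+ℓ, N−ℓ−1−t) · ((ℓ+t+1)!/t!) · (2β)^{ℓ+t} · (β − i p)^{−(ℓ+t+2)}, where i is the imaginary unit. -/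
open MeasureTheory Complex Real Nat
open Filter Set Topology

/-!
The integrand is `r ↦ P(r) e^{-c r}` with `c = β - i p`, which has `Re c = β > 0`, and `P` an
explicit polynomial. Integrating term by term with the complex Gamma-type integral
`∫₀^∞ r^n e^{-c r} dr = n! / c^{n+1}` (integration by parts in `n`) gives the closed form.
-/

section ComplexRate

variable {c : ℂ}

lemma norm_pow_mul_cexp_neg_mul {r : ℝ} (hr : 0 ≤ r) (n : ℕ) :
    ‖(r : ℂ) ^ n * cexp (-(c * r))‖ = r ^ (n : ℝ) * Real.exp (-c.re * r) := by
  rw [norm_mul, norm_pow, Complex.norm_exp, norm_real, Real.norm_of_nonneg hr, rpow_natCast]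
  simp

lemma integrableOn_pow_mul_cexp_neg_mul_Ioi (hc : 0 < c.re) (n : ℕ) :
    IntegrableOn (fun r : ℝ ↦ (r : ℂ) ^ n * cexp (-(c * r))) (Ioi 0) := by
  have hreal : IntegrableOn (fun r : ℝ ↦ r ^ (n : ℝ) * Real.exp (-c.re * r ^ (1 : ℝ)))
      (Ioi 0) :=
    integrableOn_rpow_mul_exp_neg_mul_rpow (neg_one_lt_zero.trans_le n.cast_nonneg)
      zero_lt_one hc
  refine (integrable_norm_iff (by fun_prop)).mp (hreal.congr_fun (fun r hr ↦ ?_) measurableSet_Ioi)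
  simp only [rpow_one, norm_pow_mul_cexp_neg_mul (le_of_lt hr)]

lemma tendsto_pow_mul_cexp_neg_mul_atTop (hc : 0 < c.re) (n : ℕ) :
    Tendsto (fun r : ℝ ↦ (r : ℂ) ^ n * cexp (-(c * r))) atTop (𝓝 0) := by
  rw [tendsto_zero_iff_norm_tendsto_zero]
  refine (tendsto_rpow_mul_exp_neg_mul_atTop_nhds_zero n c.re hc).congr' ?_
  filter_upwards [eventually_ge_atTop 0] with r hr
  rw [norm_pow_mul_cexp_neg_mul hr]

lemma integral_pow_succ_mul_cexp_neg_mul_Ioi (hc : 0 < c.re) (n : ℕ) :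
    ∫ r in Ioi (0 : ℝ), (r : ℂ) ^ (n + 1) * cexp (-(c * r))
      = (n + 1) / c * ∫ r in Ioi (0 : ℝ), (r : ℂ) ^ n * cexp (-(c * r)) := by
  have hc0 : c ≠ 0 := fun h ↦ by simp [h] at hc
  have hderiv : ∀ x ∈ Ici (0 : ℝ),
      HasDerivAt (fun r : ℝ ↦ -((r : ℂ) ^ (n + 1) * cexp (-(c * r))) / c)
        ((x : ℂ) ^ (n + 1) * cexp (-(c * x))
          - (n + 1) / c * ((x : ℂ) ^ n * cexp (-(c * x)))) x := by
    intro x _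
    have hpow : HasDerivAt (fun r : ℝ ↦ (r : ℂ) ^ (n + 1)) ((n + 1) * (x : ℂ) ^ n) x := by
      simpa using (hasDerivAt_pow (n + 1) (x : ℂ)).comp_ofReal
    have hexp : HasDerivAt (fun r : ℝ ↦ cexp (-(c * r))) (cexp (-(c * x)) * -c) x := by
      simpa using (((hasDerivAt_id (x : ℂ)).const_mul c).neg.cexp).comp_ofReal
    refine ((hpow.mul hexp).neg.div_const c).congr_deriv ?_
    field_simp
    ring
  have hint_succ := integrableOn_pow_mul_cexp_neg_mul_Ioi hc (n + 1)
  have hint := (integrableOn_pow_mul_cexp_neg_mul_Ioi hc n).const_mul ((n + 1) / c)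
  have hparts := integral_Ioi_of_hasDerivAt_of_tendsto' hderiv (hint_succ.sub hint)
    (by simpa using (tendsto_pow_mul_cexp_neg_mul_atTop hc (n + 1)).neg.div_const c)
  rw [integral_sub hint_succ hint, integral_const_mul] at hparts
  simp only [ofReal_zero, ne_eq, add_eq_zero, one_ne_zero, and_false, not_false_eq_true,
    zero_pow, zero_mul, neg_zero, zero_div, sub_zero] at hparts
  exact sub_eq_zero.mp hparts

lemma integral_pow_mul_cexp_neg_mul_Ioi (hc : 0 < c.re) (n : ℕ) :
    ∫ r in Ioi (0 : ℝ), (r : ℂ) ^ n * cexp (-(c * r)) = n ! / c ^ (n + 1) := by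
  induction n with
  | zero =>
    simpa [← neg_mul] using integral_exp_mul_complex_Ioi (a := -c) (by simpa using hc) 0
  | succ n ih =>
    rw [integral_pow_succ_mul_cexp_neg_mul_Ioi hc, ih, factorial_succ]
    push_cast
    ring

lemma integral_sum_mul_pow_mul_cexp_neg_mul_Ioi {ι : Type*} (hc : 0 < c.re) (s : Finset ι)
    (a : ι → ℂ) (k : ι → ℕ) :
    ∫ r in Ioi (0 : ℝ), ∑ i ∈ s, a i * ((r : ℂ) ^ k i * cexp (-(c * r)))
      = ∑ i ∈ s, a i * ((k i)! / c ^ (k i + 1)) := by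
  rw [integral_finsetSum s fun i _ ↦ (integrableOn_pow_mul_cexp_neg_mul_Ioi hc (k i)).const_mul _]
  simp only [integral_const_mul, integral_pow_mul_cexp_neg_mul_Ioi hc]

end ComplexRate

theorem hydrogen_radial_momentum_wavefunction_rational_general
    (N ℓ : ℕ) (β : ℝ) (hβ : 0 < β)
    (R : ℝ → ℝ)
    (hR : ∀ ρ : ℝ, R ρ = Real.exp (-ρ / 2) * ρ ^ ℓ *
      ∑ t ∈ Finset.range (N - ℓ),
        (-1 : ℝ) ^ t * ((N + ℓ).choose (N - ℓ - 1 - t) : ℝ) * ρ ^ t / (t ! : ℝ))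
    (p : ℝ) :
    (∫ r in Set.Ioi (0 : ℝ),
        Complex.exp (Complex.I * p * r) * ((R (2 * β * r) : ℝ) : ℂ) * (r : ℂ))
      = ∑ t ∈ Finset.range (N - ℓ),
          (-1 : ℂ) ^ t * ((N + ℓ).choose (N - ℓ - 1 - t) : ℂ)
            * (((ℓ + t + 1)! : ℂ) / (t ! : ℂ)) * ((2 * β : ℝ) : ℂ) ^ (ℓ + t)
            * ((β : ℂ) - Complex.I * (p : ℂ)) ^ (-(ℓ + t + 2 : ℤ)) := by
  set c : ℂ := β - I * p
  have hc : 0 < c.re := by simpa [c] using hβ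
  have hintegrand : ∀ r : ℝ, cexp (I * p * r) * ((R (2 * β * r) : ℝ) : ℂ) * (r : ℂ)
      = ∑ t ∈ Finset.range (N - ℓ),
          (-1 : ℂ) ^ t * ((N + ℓ).choose (N - ℓ - 1 - t) : ℂ) * ((2 * β : ℂ) ^ (ℓ + t) / t !)
            * ((r : ℂ) ^ (ℓ + t + 1) * cexp (-(c * r))) := by
    intro r
    have hexp : cexp (-(c * r)) = cexp (I * p * r) * cexp (-(2 * β * r) / 2) := by
      rw [← Complex.exp_add]
      congr 1
      simp only [c]
      ring
    rw [hR, hexp]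
    push_cast
    rw [Finset.mul_sum, Finset.mul_sum, Finset.sum_mul]
    refine Finset.sum_congr rfl fun t _ ↦ ?_
    ring
  simp_rw [hintegrand]
  rw [integral_sum_mul_pow_mul_cexp_neg_mul_Ioi hc]
  refine Finset.sum_congr rfl fun t _ ↦ ?_
  rw [show (-(ℓ + t + 2 : ℤ)) = -((ℓ + t + 1 + 1 : ℕ) : ℤ) by push_cast; ring, zpow_neg, zpow_natCast]
  push_cast
  ring

/-- rational (Lombardi–Ogilvie) closed form of the radial momentum-space
hydrogen wave functions. With `R_{Nℓ}(ρ) = e^{−ρ/2} ρ^ℓ Σ_t (−1)^t C(N+ℓ, N−ℓ−1−t) ρ^t/t!`,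
the transform `ψ_{Nℓ}(p) = ∫₀^∞ e^{ipr} R_{Nℓ}(2βr) r dr` equals
`Σ_t (−1)^t C(N+ℓ, N−ℓ−1−t) ((ℓ+t+1)!/t!) (2β)^{ℓ+t} (β − ip)^{−(ℓ+t+2)}`. -/
theorem hydrogen_radial_momentum_wavefunction_rational
    (N ℓ : ℕ) (hN : 1 ≤ N) (hℓ : ℓ + 1 ≤ N) (β : ℝ) (hβ : 0 < β)
    (R : ℝ → ℝ)
    (hR : ∀ ρ : ℝ, R ρ = Real.exp (-ρ / 2) * ρ ^ ℓ *
      ∑ t ∈ Finset.range (N - ℓ),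
        (-1 : ℝ) ^ t * ((N + ℓ).choose (N - ℓ - 1 - t) : ℝ) * ρ ^ t / (t ! : ℝ))
    (p : ℝ) :
    (∫ r in Set.Ioi (0 : ℝ),
        Complex.exp (Complex.I * p * r) * ((R (2 * β * r) : ℝ) : ℂ) * (r : ℂ))
      = ∑ t ∈ Finset.range (N - ℓ),
          (-1 : ℂ) ^ t * ((N + ℓ).choose (N - ℓ - 1 - t) : ℂ)
            * (((ℓ + t + 1)! : ℂ) / (t ! : ℂ)) * ((2 * β : ℝ) : ℂ) ^ (ℓ + t)
            * ((β : ℂ) - Complex.I * (p : ℂ)) ^ (-(ℓ + t + 2 : ℤ)) :=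
  hydrogen_radial_momentum_wavefunction_rational_general N ℓ β hβ R hR p
end

section
/- Fix integers N ≥ 1 and 0 ≤ ℓ ≤ N−1 and a real β > 0, and let R_{Nℓ}(ρ) = e^{−ρ/2} ρ^ℓ · Σ_{t=0}^{N−ℓ−1} (−1)^t · binom(N+ℓ, N−ℓ−1−t) · ρ^t / t!. Then for every p ∈ ℝ, with θ = arctan(p/β), the imaginary part of ψ_{Nℓ}(p) = ∫₀^∞ e^{i p r} R_{Nℓ}(2β r) r dr equals the finite Gegenbauer (Chebyshev second-kind) expansion Im ψ_{Nℓ}(p) = Σ_{t=0}^{N−ℓ−1} b_t · sin θ · (cos θ)^{ℓ+t+2} · U_{ℓ+t+1}(cos θ), where U_n denotes the Chebyshev polynomial of the second kind (equal to the Gegenbauer polynomial C_n^1) and b_t = (−1)^t · binom(N+ℓ, N−ℓ−1−t) · (ℓ+t+1)! · 2^{ℓ+t+2} / ( t! · (2β)² ). -/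
/-!
With `b = β - i p`, the integrand is a finite sum of terms `r ^ k e^{-b r}`, whose integrals over
`(0, ∞)` are `k! / b ^ (k + 1)` (integration by parts, as for the Gamma function, but with a complex
rate). Writing `1 / b = (cos θ / β) e^{i θ}` with `θ = arctan (p / β)`, the imaginary part of
`1 / b ^ (k + 1)` is `(cos θ / β) ^ (k + 1) sin ((k + 1) θ)`, and
`sin ((k + 1) θ) = sin θ · U_k (cos θ)`.
-/

open MeasureTheory Complex Real Nat Set Filter Topology

section LaplaceTransformPow

variable {b : ℂ}

lemma norm_ofReal_pow_mul_cexp_neg_mul {x : ℝ} (hx : 0 ≤ x) (n : ℕ) :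
    ‖(x : ℂ) ^ n * cexp (-b * x)‖ = x ^ n * rexp (-b.re * x) := by
  simp [Complex.norm_exp, abs_of_nonneg hx]

lemma tendsto_ofReal_pow_mul_cexp_neg_mul_atTop (hb : 0 < b.re) (n : ℕ) :
    Tendsto (fun x : ℝ => (x : ℂ) ^ n * cexp (-b * x)) atTop (𝓝 0) := by
  rw [tendsto_zero_iff_norm_tendsto_zero]
  refine (tendsto_rpow_mul_exp_neg_mul_atTop_nhds_zero n b.re hb).congr' ?_
  filter_upwards [eventually_ge_atTop 0] with x hx
  rw [norm_ofReal_pow_mul_cexp_neg_mul hx, Real.rpow_natCast]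

lemma integrableOn_ofReal_pow_mul_cexp_neg_mul_Ioi (hb : 0 < b.re) (n : ℕ) :
    IntegrableOn (fun x : ℝ => (x : ℂ) ^ n * cexp (-b * x)) (Ioi 0) := by
  have hreal : IntegrableOn (fun x : ℝ => x ^ (n : ℝ) * rexp (-b.re * x ^ (1 : ℝ))) (Ioi 0) :=
    integrableOn_rpow_mul_exp_neg_mul_rpow (by linarith [n.cast_nonneg (α := ℝ)]) one_pos hb
  refine hreal.mono' (by fun_prop) ?_
  filter_upwards [ae_restrict_mem measurableSet_Ioi] with x hx
  rw [norm_ofReal_pow_mul_cexp_neg_mul (le_of_lt hx), Real.rpow_natCast, Real.rpow_one]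

lemma integral_ofReal_pow_succ_mul_cexp_neg_mul_Ioi (hb : 0 < b.re) (n : ℕ) :
    ∫ x in Ioi (0 : ℝ), (x : ℂ) ^ (n + 1) * cexp (-b * x)
      = (n + 1) / b * ∫ x in Ioi (0 : ℝ), (x : ℂ) ^ n * cexp (-b * x) := by
  have hb0 : b ≠ 0 := fun h => by simp [h] at hb
  have hu (x : ℝ) : HasDerivAt (fun x : ℝ => (x : ℂ) ^ (n + 1)) ((n + 1) * (x : ℂ) ^ n) x := by
    simpa using (hasDerivAt_pow (n + 1) (x : ℂ)).comp_ofReal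
  have hv (x : ℝ) : HasDerivAt (fun x : ℝ => -b⁻¹ * cexp (-b * x)) (cexp (-b * x)) x := by
    convert (((hasDerivAt_id (x : ℂ)).const_mul (-b)).cexp.const_mul (-b⁻¹)).comp_ofReal using 1
    · rfl
    · rw [id_eq, mul_one]
      field_simp
  have huv : Continuous fun x : ℝ => (x : ℂ) ^ (n + 1) * (-b⁻¹ * cexp (-b * x)) := by fun_prop
  have hparts := integral_Ioi_mul_deriv_eq_deriv_mul (a := 0) (a' := 0) (b' := 0)
    (fun x _ => hu x) (fun x _ => hv x)
    (integrableOn_ofReal_pow_mul_cexp_neg_mul_Ioi hb (n + 1))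
    (IntegrableOn.congr_fun ((integrableOn_ofReal_pow_mul_cexp_neg_mul_Ioi hb n).const_mul
      (-((n + 1) * b⁻¹))) (fun x _ => by simp only [Pi.mul_apply]; ring) measurableSet_Ioi)
    (by convert (huv.tendsto 0).mono_left nhdsWithin_le_nhds using 2 <;> simp)
    (by
      convert (tendsto_ofReal_pow_mul_cexp_neg_mul_atTop hb (n + 1)).const_mul (-b⁻¹) using 1
      · ext x; simp only [Pi.mul_apply]; ring
      · simp)
  rw [hparts, ← integral_const_mul, sub_zero, zero_sub, ← integral_neg]
  congr 1
  funext x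
  ring

lemma integral_ofReal_pow_mul_cexp_neg_mul_Ioi (hb : 0 < b.re) (n : ℕ) :
    ∫ x in Ioi (0 : ℝ), (x : ℂ) ^ n * cexp (-b * x) = n ! / b ^ (n + 1) := by
  induction n with
  | zero => simpa [neg_div, div_neg] using integral_exp_mul_complex_Ioi (a := -b) (by simpa) 0
  | succ n ih =>
    have hb0 : b ≠ 0 := fun h => by simp [h] at hb
    rw [integral_ofReal_pow_succ_mul_cexp_neg_mul_Ioi hb, ih, factorial_succ]
    push_cast
    field_simp
    ring

end LaplaceTransformPow

lemma inv_ofReal_sub_mul_I {β : ℝ} (hβ : β ≠ 0) (p : ℝ) :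
    ((β : ℂ) - I * p)⁻¹ = ((Real.cos (Real.arctan (p / β)) / β : ℝ) : ℂ)
      * cexp (Real.arctan (p / β) * I) := by
  have hsin : Real.sin (Real.arctan (p / β)) = p / β * Real.cos (Real.arctan (p / β)) := by
    rw [Real.sin_arctan, Real.cos_arctan]; ring
  have hcos : Real.cos (Real.arctan (p / β)) ^ 2 * (β ^ 2 + p ^ 2) = β ^ 2 := by
    rw [Real.cos_sq_arctan]; field_simp
  refine inv_eq_of_mul_eq_one_right ?_
  rw [Complex.exp_mul_I, ← Complex.ofReal_cos, ← Complex.ofReal_sin, hsin]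
  generalize Real.cos (Real.arctan (p / β)) = c at hcos ⊢
  have hβ' : (β : ℂ) ≠ 0 := ofReal_ne_zero.mpr hβ
  push_cast
  field_simp
  have hcos' : (c : ℂ) ^ 2 * (β ^ 2 + p ^ 2) = β ^ 2 := by exact_mod_cast hcos
  linear_combination hcos' - (p : ℂ) ^ 2 * c ^ 2 * I_sq

lemma im_inv_ofReal_sub_mul_I_pow {β : ℝ} (hβ : β ≠ 0) (p : ℝ) (n : ℕ) :
    (((β : ℂ) - I * p) ^ n)⁻¹.im
      = (Real.cos (Real.arctan (p / β)) / β) ^ n * Real.sin (n * Real.arctan (p / β)) := by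
  rw [← inv_pow, inv_ofReal_sub_mul_I hβ, mul_pow, ← Complex.exp_nat_mul, ← Complex.ofReal_pow,
    Complex.im_ofReal_mul, ← mul_assoc, ← Complex.ofReal_natCast, ← Complex.ofReal_mul,
    Complex.exp_ofReal_mul_I_im]

theorem hydrogen_radial_momentum_wavefunction_im_chebyshev_general
    (N ℓ : ℕ) (β : ℝ) (hβ : 0 < β)
    (R : ℝ → ℝ)
    (hR : ∀ ρ : ℝ, R ρ = Real.exp (-ρ / 2) * ρ ^ ℓ *
      ∑ t ∈ Finset.range (N - ℓ),
        (-1 : ℝ) ^ t * ((N + ℓ).choose (N - ℓ - 1 - t) : ℝ) * ρ ^ t / (t ! : ℝ))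
    (p : ℝ) (θ : ℝ) (hθ : θ = Real.arctan (p / β)) :
    (∫ r in Set.Ioi (0 : ℝ),
        Complex.exp (Complex.I * p * r) * ((R (2 * β * r) : ℝ) : ℂ) * (r : ℂ)).im
      = ∑ t ∈ Finset.range (N - ℓ),
          ((-1 : ℝ) ^ t * ((N + ℓ).choose (N - ℓ - 1 - t) : ℝ) * ((ℓ + t + 1)! : ℝ)
              * 2 ^ (ℓ + t + 2) / ((t ! : ℝ) * (2 * β) ^ 2))
            * Real.sin θ * Real.cos θ ^ (ℓ + t + 2)
            * (Polynomial.Chebyshev.U ℝ ((ℓ : ℤ) + t + 1)).eval (Real.cos θ) := by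
  set b : ℂ := β - I * p
  have hb : 0 < b.re := by simpa [b]
  have hintegrand (r : ℝ) : cexp (I * p * r) * ((R (2 * β * r) : ℝ) : ℂ) * r
      = ∑ t ∈ Finset.range (N - ℓ), (((-1) ^ t * ((N + ℓ).choose (N - ℓ - 1 - t) : ℝ)
          * (2 * β) ^ (ℓ + t) / t ! : ℝ) : ℂ) * ((r : ℂ) ^ (ℓ + t + 1) * cexp (-b * r)) := by
    have hexp : cexp (I * p * r) * cexp (-(2 * β * r) / 2) = cexp (-b * r) := by
      rw [← Complex.exp_add]; congr 1; simp only [b]; ring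
    rw [hR, ← hexp]
    push_cast
    simp only [Finset.mul_sum, Finset.sum_mul]
    refine Finset.sum_congr rfl fun t _ => ?_
    ring
  simp_rw [hintegrand]
  rw [integral_finsetSum _ fun t _ =>
    (integrableOn_ofReal_pow_mul_cexp_neg_mul_Ioi hb _).const_mul _]
  simp only [integral_const_mul, integral_ofReal_pow_mul_cexp_neg_mul_Ioi hb, Complex.im_sum]
  refine Finset.sum_congr rfl fun t _ => ?_
  rw [← ofReal_natCast, mul_div_assoc', ← ofReal_mul, div_eq_mul_inv _ (b ^ _), im_ofReal_mul,
    im_inv_ofReal_sub_mul_I_pow hβ.ne', ← hθ,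
    show ((ℓ + t + 1 + 1 : ℕ) : ℝ) = (((ℓ : ℤ) + t + 1 : ℤ) : ℝ) + 1 by push_cast; ring,
    ← Polynomial.Chebyshev.U_real_cos, div_pow]
  field_simp
  ring

/-- Gegenbauer (Chebyshev second-kind) expansion of the imaginary part of the
radial momentum-space hydrogen wave functions. With
`R_{Nℓ}(ρ) = e^{−ρ/2} ρ^ℓ Σ_t (−1)^t C(N+ℓ, N−ℓ−1−t) ρ^t/t!` and `θ = arctan(p/β)`,
`Im ψ_{Nℓ}(p) = Σ_t b_t sin θ cos^{ℓ+t+2} θ · U_{ℓ+t+1}(cos θ)`, where `U_n` is the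
Chebyshev polynomial of the second kind and
`b_t = (−1)^t C(N+ℓ, N−ℓ−1−t) (ℓ+t+1)! 2^{ℓ+t+2} / (t! (2β)²)`. -/
theorem hydrogen_radial_momentum_wavefunction_im_chebyshev
    (N ℓ : ℕ) (hN : 1 ≤ N) (hℓ : ℓ + 1 ≤ N) (β : ℝ) (hβ : 0 < β)
    (R : ℝ → ℝ)
    (hR : ∀ ρ : ℝ, R ρ = Real.exp (-ρ / 2) * ρ ^ ℓ *
      ∑ t ∈ Finset.range (N - ℓ),
        (-1 : ℝ) ^ t * ((N + ℓ).choose (N - ℓ - 1 - t) : ℝ) * ρ ^ t / (t ! : ℝ))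
    (p : ℝ) (θ : ℝ) (hθ : θ = Real.arctan (p / β)) :
    (∫ r in Set.Ioi (0 : ℝ),
        Complex.exp (Complex.I * p * r) * ((R (2 * β * r) : ℝ) : ℂ) * (r : ℂ)).im
      = ∑ t ∈ Finset.range (N - ℓ),
          ((-1 : ℝ) ^ t * ((N + ℓ).choose (N - ℓ - 1 - t) : ℝ) * ((ℓ + t + 1)! : ℝ)
              * 2 ^ (ℓ + t + 2) / ((t ! : ℝ) * (2 * β) ^ 2))
            * Real.sin θ * Real.cos θ ^ (ℓ + t + 2)
            * (Polynomial.Chebyshev.U ℝ ((ℓ : ℤ) + t + 1)).eval (Real.cos θ) :=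
  hydrogen_radial_momentum_wavefunction_im_chebyshev_general N ℓ β hβ R hR p θ hθ
end
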